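/- arXiv:0805.1279 — 9 statements merged into one kernel-verified Lean document; each statement's English description precedes it below -/
import Mathlib

section
/- For all integers n ≥ 0 and m ≥ 1, the identity ∑_{p=0}^{⌊n/2⌋} (m/(3p+m))·C(3p+m, p)·C(n+p+m−1, n−2p) = (m/(2n+m))·C(2n+m, n) holds, where C(a,b) denotes the binomial coefficient. -/
open Finset Nat


private def BB (m p : ℕ) : ℚ := (m : ℚ) / (3 * p + m) * ((3 * p + m).choose p)
private def TT (m n p : ℕ) : ℚ :=
  if 2 * p ≤ n then ((n + p + m - 1).choose (n - 2 * p) : ℚ) else 0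
private def LL (m n : ℕ) : ℚ := ∑ p ∈ range (n + 1), BB m p * TT m n p
private def AA (m n : ℕ) : ℚ := (m : ℚ) / (2 * n + m) * ((2 * n + m).choose n)

private lemma fact_ne (k : ℕ) : (k ! : ℚ) ≠ 0 := by
  exact_mod_cast (Nat.factorial_pos k).ne'

private lemma A_rec (m n : ℕ) : AA (m+1) (n+1) = AA m (n+1) + AA (m+2) n := by
  unfold AA
  have h1 : 2 * (n+1) + (m+1) = 2*n+m+3 := by ring
  have h2 : 2 * (n+1) + m = 2*n+m+2 := by ring
  have h3 : 2 * n + (m+2) = 2*n+m+2 := by ring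
  rw [h1, h2, h3]
  rw [Nat.cast_choose ℚ (by omega : n+1 ≤ 2*n+m+3),
      Nat.cast_choose ℚ (by omega : n+1 ≤ 2*n+m+2),
      Nat.cast_choose ℚ (by omega : n ≤ 2*n+m+2)]
  have e1 : 2*n+m+3 - (n+1) = n+m+2 := by omega
  have e2 : 2*n+m+2 - (n+1) = n+m+1 := by omega
  have e3 : 2*n+m+2 - n = n+m+2 := by omega
  rw [e1, e2, e3]
  have f1 : ((2*n+m+3)! : ℚ) = (2*n+m+3) * (2*n+m+2)! := by
    rw [show 2*n+m+3 = (2*n+m+2)+1 from rfl, Nat.factorial_succ]; push_cast; ring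
  have f2 : ((n+m+2)! : ℚ) = (n+m+2) * (n+m+1)! := by
    rw [show n+m+2 = (n+m+1)+1 from rfl, Nat.factorial_succ]; push_cast; ring
  have f3 : ((n+1)! : ℚ) = (n+1) * n ! := by
    rw [Nat.factorial_succ]; push_cast; ring
  rw [f1, f2, f3]
  have := fact_ne (2*n+m+2); have := fact_ne (n+m+1); have := fact_ne n
  have h4 : ((2*n+m+3 : ℕ) : ℚ) ≠ 0 := by positivity
  have h5 : ((2*n+m+2 : ℕ) : ℚ) ≠ 0 := by positivity
  have h6 : ((n+m+2 : ℕ) : ℚ) ≠ 0 := by positivity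
  have h7 : ((n+1 : ℕ) : ℚ) ≠ 0 := by positivity
  push_cast
  field_simp
  ring

private lemma B_rec (m q : ℕ) : BB (m+1) (q+1) = BB m (q+1) + BB (m+3) q := by
  unfold BB
  have h1 : 3 * (q+1) + (m+1) = 3*q+m+4 := by ring
  have h2 : 3 * (q+1) + m = 3*q+m+3 := by ring
  have h3 : 3 * q + (m+3) = 3*q+m+3 := by ring
  rw [h1, h2, h3]
  rw [Nat.cast_choose ℚ (by omega : q+1 ≤ 3*q+m+4),
      Nat.cast_choose ℚ (by omega : q+1 ≤ 3*q+m+3),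
      Nat.cast_choose ℚ (by omega : q ≤ 3*q+m+3)]
  have e1 : 3*q+m+4 - (q+1) = 2*q+m+3 := by omega
  have e2 : 3*q+m+3 - (q+1) = 2*q+m+2 := by omega
  have e3 : 3*q+m+3 - q = 2*q+m+3 := by omega
  rw [e1, e2, e3]
  have f1 : ((3*q+m+4)! : ℚ) = (3*q+m+4) * (3*q+m+3)! := by
    rw [show 3*q+m+4 = (3*q+m+3)+1 from rfl, Nat.factorial_succ]; push_cast; ring
  have f2 : ((2*q+m+3)! : ℚ) = (2*q+m+3) * (2*q+m+2)! := by
    rw [show 2*q+m+3 = (2*q+m+2)+1 from rfl, Nat.factorial_succ]; push_cast; ring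
  have f3 : ((q+1)! : ℚ) = (q+1) * q ! := by
    rw [Nat.factorial_succ]; push_cast; ring
  rw [f1, f2, f3]
  have := fact_ne (3*q+m+3); have := fact_ne (2*q+m+2); have := fact_ne q
  have h4 : ((3*q+m+4 : ℕ) : ℚ) ≠ 0 := by positivity
  have h5 : ((3*q+m+3 : ℕ) : ℚ) ≠ 0 := by positivity
  have h6 : ((2*q+m+3 : ℕ) : ℚ) ≠ 0 := by positivity
  have h7 : ((q+1 : ℕ) : ℚ) ≠ 0 := by positivity
  push_cast
  field_simp
  ring

private lemma TT_zero {m n p : ℕ} (h : ¬ 2 * p ≤ n) : TT m n p = 0 := if_neg h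

private lemma T_pascal (m n p : ℕ) :
    TT (m+1) (n+1) p = TT m (n+1) p + TT (m+1) n p := by
  unfold TT
  rcases le_or_gt (2*p) n with h | h
  · rw [if_pos (by omega), if_pos (by omega), if_pos h]
    have e1 : n+1+p+(m+1)-1 = (n+p+m)+1 := by omega
    have e2 : (n+1) - 2*p = (n-2*p)+1 := by omega
    have e3 : n+1+p+m-1 = n+p+m := by omega
    have e4 : n+p+(m+1)-1 = n+p+m := by omega
    rw [e1, e2, e3, e4, Nat.choose_succ_succ]
    push_cast
    ring
  rcases le_or_gt (2*p) (n+1) with h2 | h2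
  · rw [if_pos h2, if_pos h2, if_neg (by omega)]
    have e1 : (n+1) - 2*p = 0 := by omega
    rw [e1, Nat.choose_zero_right, Nat.choose_zero_right]
    norm_num
  · rw [if_neg (by omega), if_neg (by omega), if_neg (by omega)]
    norm_num

private lemma T_shift (m n q : ℕ) : TT m (n+2) (q+1) = TT (m+3) n q := by
  unfold TT
  rcases le_or_gt (2*q) n with h | h
  · rw [if_pos (by omega), if_pos h]
    have e1 : n+2+(q+1)+m-1 = n+q+(m+3)-1 := by omega
    have e2 : (n+2) - 2*(q+1) = n - 2*q := by omega
    rw [e1, e2]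
  · rw [if_neg (by omega), if_neg (by omega)]

private lemma B_zero_left (p : ℕ) : BB 0 p = 0 := by
  unfold BB; norm_num

private lemma p0_term (m n : ℕ) :
    BB (m+1) 0 * TT m (n+1) 0 = BB m 0 * TT m (n+1) 0 := by
  rcases Nat.eq_zero_or_pos m with rfl | hm
  · have : TT 0 (n+1) 0 = 0 := by
      unfold TT
      rw [if_pos (by omega)]
      have e : n+1+0+0-1 = n := by omega
      have e2 : (n+1) - 2*0 = n+1 := by omega
      rw [e, e2, Nat.choose_eq_zero_of_lt (by omega)]
      norm_num
    rw [this]; ring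
  · have hB : ∀ k : ℕ, 1 ≤ k → BB k 0 = 1 := by
      intro k hk
      unfold BB
      rw [mul_zero, zero_add, Nat.choose_zero_right]
      have : (k:ℚ) ≠ 0 := Nat.cast_ne_zero.mpr (by omega)
      field_simp
      norm_num
    rw [hB (m+1) (by omega), hB m hm]

private lemma L_rec (n : ℕ) : ∀ m, LL (m+1) (n+1) = LL m (n+1) + LL (m+2) n := by
  induction n with
  | zero =>
    intro m
    unfold LL
    simp only [Finset.sum_range_succ, Finset.sum_range_zero, zero_add]
    have t1 : TT (m+1) 1 1 = 0 := TT_zero (by omega)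
    have t2 : TT m 1 1 = 0 := TT_zero (by omega)
    rw [t1, t2]
    have hT : ∀ k : ℕ, TT k 1 0 = (k : ℚ) := by
      intro k
      unfold TT
      rw [if_pos (by omega)]
      have e : 1+0+k-1 = k := by omega
      have e2 : 1 - 2*0 = 1 := by omega
      rw [e, e2, Nat.choose_one_right]
    rw [hT, hT]
    have := p0_term m 0
    rw [hT] at this
    have hB1 : BB (m+1) 0 = 1 := by
      unfold BB
      rw [mul_zero, zero_add, Nat.choose_zero_right]
      have : ((m:ℚ)+1) ≠ 0 := by positivity
      push_cast
      field_simp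
      norm_num
    have hB2 : BB (m+2) 0 = 1 := by
      unfold BB
      rw [mul_zero, zero_add, Nat.choose_zero_right]
      have : ((m:ℚ)+2) ≠ 0 := by positivity
      push_cast
      field_simp
      norm_num
    have hT0 : TT (m+2) 0 0 = 1 := by
      unfold TT
      rw [if_pos (by omega)]
      norm_num
    rw [hB1, hB2, hT0]
    rw [hB1] at this
    push_cast at this ⊢
    linarith
  | succ n ih =>
    intro m
    unfold LL
    calc ∑ p ∈ range (n+1+1+1), BB (m+1) p * TT (m+1) (n+1+1) p
        = ∑ p ∈ range (n+3), BB (m+1) p * (TT m (n+2) p + TT (m+1) (n+1) p) := by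
          apply Finset.sum_congr rfl
          intro p _
          rw [T_pascal m (n+1) p]
      _ = (∑ p ∈ range (n+3), BB (m+1) p * TT m (n+2) p)
          + ∑ p ∈ range (n+3), BB (m+1) p * TT (m+1) (n+1) p := by
          rw [← Finset.sum_add_distrib]; apply Finset.sum_congr rfl; intros; ring
      _ = (∑ p ∈ range (n+3), BB (m+1) p * TT m (n+2) p) + LL (m+1) (n+1) := by
          congr 1
          unfold LL
          rw [Finset.sum_range_succ, TT_zero (m := m+1) (n := n+1) (p := n+2) (by omega)]
          ring
      _ = ((∑ q ∈ range (n+2), BB (m+1) (q+1) * TT m (n+2) (q+1))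
            + BB (m+1) 0 * TT m (n+2) 0) + LL (m+1) (n+1) := by
          rw [Finset.sum_range_succ']
      _ = ((∑ q ∈ range (n+2), (BB m (q+1) * TT m (n+2) (q+1)
              + BB (m+3) q * TT (m+3) n q))
            + BB m 0 * TT m (n+2) 0) + LL (m+1) (n+1) := by
          rw [p0_term m (n+1)]
          congr 1
          congr 1
          apply Finset.sum_congr rfl
          intro q _
          rw [B_rec m q, T_shift m n q]
          ring
      _ = ((∑ q ∈ range (n+2), BB m (q+1) * TT m (n+2) (q+1))
            + BB m 0 * TT m (n+2) 0)
          + (∑ q ∈ range (n+2), BB (m+3) q * TT (m+3) n q) + LL (m+1) (n+1) := by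
          rw [Finset.sum_add_distrib]; ring
      _ = LL m (n+2) + LL (m+3) n + LL (m+1) (n+1) := by
          congr 1
          congr 1
          · unfold LL
            rw [Finset.sum_range_succ' (fun p => BB m p * TT m (n+2) p) (n+2)]
          · unfold LL
            rw [Finset.sum_range_succ, TT_zero (m := m+3) (n := n) (p := n+1) (by omega)]
            ring
      _ = LL m (n+2) + LL (m+2) (n+1) := by
          have := ih (m+1)
          rw [show m+1+1 = m+2 from rfl] at this
          rw [this]
          ring

private lemma A_zero_left (n : ℕ) : AA 0 n = 0 := by unfold AA; norm_num

private lemma L_zero_left (n : ℕ) : LL 0 n = 0 := by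
  unfold LL
  apply Finset.sum_eq_zero
  intro p _
  rw [B_zero_left]; ring

private lemma main_eq : ∀ n m, LL m n = AA m n := by
  intro n
  induction n with
  | zero =>
    intro m
    rcases Nat.eq_zero_or_pos m with rfl | hm
    · rw [A_zero_left, L_zero_left]
    · unfold LL AA
      rw [show (0:ℕ)+1 = 1 from rfl, Finset.sum_range_one]
      have hB : BB m 0 = 1 := by
        unfold BB
        rw [mul_zero, zero_add, Nat.choose_zero_right]
        have : (m:ℚ) ≠ 0 := Nat.cast_ne_zero.mpr (by omega)
        field_simp
        norm_num
      have hT : TT m 0 0 = 1 := by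
        unfold TT
        rw [if_pos (by omega)]
        norm_num
      rw [hB, hT, Nat.choose_zero_right]
      have : (m:ℚ) ≠ 0 := Nat.cast_ne_zero.mpr (by omega)
      push_cast
      field_simp
      norm_num
  | succ n ih =>
    intro m
    induction m with
    | zero => rw [A_zero_left, L_zero_left]
    | succ m ihm =>
      rw [L_rec n m, ihm, ih (m+2), A_rec m n]


/-- **Theorem 1** (Sun). For all integers `n ≥ 0` and `m ≥ 1`,
`∑_{p=0}^{⌊n/2⌋} (m/(3p+m))·C(3p+m,p)·C(n+p+m−1, n−2p) = (m/(2n+m))·C(2n+m,n)`,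
as an identity of rational numbers. -/
theorem sum_fuss_catalan_ternary_eq_binary (n m : ℕ) (hm : 1 ≤ m) :
    ∑ p ∈ Finset.range (n / 2 + 1),
      ((m : ℚ) / (3 * p + m)) * (Nat.choose (3 * p + m) p) *
        (Nat.choose (n + p + m - 1) (n - 2 * p))
      = ((m : ℚ) / (2 * n + m)) * (Nat.choose (2 * n + m) n) := by
  have key : LL m n = AA m n := main_eq n m
  have hsub : Finset.range (n/2+1) ⊆ Finset.range (n+1) :=
    Finset.range_subset_range.mpr (by omega)
  calc ∑ p ∈ Finset.range (n / 2 + 1),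
      ((m : ℚ) / (3 * p + m)) * (Nat.choose (3 * p + m) p) *
        (Nat.choose (n + p + m - 1) (n - 2 * p))
      = ∑ p ∈ Finset.range (n/2+1), BB m p * TT m n p := by
        apply Finset.sum_congr rfl
        intro p hp
        simp only [Finset.mem_range] at hp
        have h2p : 2*p ≤ n := by omega
        unfold BB TT
        rw [if_pos h2p]
    _ = LL m n := by
        unfold LL
        apply Finset.sum_subset hsub
        intro p hp hnp
        simp only [Finset.mem_range] at hp hnp
        rw [TT_zero (show ¬ 2*p ≤ n by omega)]
        ring
    _ = AA m n := key
    _ = ((m : ℚ) / (2 * n + m)) * (Nat.choose (2 * n + m) n) := by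
        unfold AA
        push_cast
        ring
end

section
/- For every integer n ≥ 0, ∑_{p=0}^{⌊n/2⌋} (1/(3p+1))·C(3p+1, p)·C(n+p, 3p) = (1/(n+1))·C(2n, n), as an identity of rational numbers; equivalently, ∑_{p=0}^{⌊n/2⌋} C_{p,3}·C(n+p, 3p) equals the n-th Catalan number C_n = (1/(n+1))·C(2n,n), where C_{p,3} = (1/(3p+1))·C(3p+1, p) is the p-th 3-Catalan number. -/
/-!
Zeilberger's algorithm: the summand `F(n, p) = C_{p,3} · C(n+p, 3p)` satisfies
`(n+1)(n+2) F(n+1, p) - 2(n+1)(2n+1) F(n, p) = G(n, p) - G(n, p+1)` with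
`G(n, p) = 2p(2p+1) C_{p,3} · C(n+p, 3p-1)`. Summing over `p` telescopes, so the sums obey the
Catalan recurrence `(n+2) C_{n+1} = 2(2n+1) C_n`, and both sides equal `1` at `n = 0`.
-/

open Finset

namespace Nat

variable {K : Type*} [Field K] [CharZero K]

theorem cast_choose_succ_right (m k : ℕ) :
    (m.choose (k + 1) : K) = m.choose k * (m - k) / (k + 1) := by
  rcases le_or_gt k m with h | h
  · rw [eq_div_iff (cast_add_one_ne_zero k), ← cast_sub h]
    exact_mod_cast choose_succ_right_eq m k
  · simp [choose_eq_zero_of_lt h, choose_eq_zero_of_lt (lt_succ_of_lt h)]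

theorem cast_choose_succ_succ (m k : ℕ) :
    ((m + 1).choose (k + 1) : K) = m.choose k * (m + 1) / (k + 1) := by
  rw [eq_div_iff (cast_add_one_ne_zero k)]
  exact_mod_cast (add_one_mul_choose_eq m k).symm.trans (mul_comm _ _)

end Nat

theorem add_two_mul_catalan_succ (n : ℕ) :
    (n + 2) * catalan (n + 1) = 2 * (2 * n + 1) * catalan n := by
  apply Nat.eq_of_mul_eq_mul_left n.succ_pos
  calc (n + 1) * ((n + 2) * catalan (n + 1)) = (n + 1) * (n + 1 + 1) * catalan (n + 1) := by ring
    _ = (n + 1) * (2 * (2 * n + 1) * catalan n) := by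
      rw [mul_assoc, succ_mul_catalan_eq_centralBinom, Nat.succ_mul_centralBinom_succ,
        ← succ_mul_catalan_eq_centralBinom]
      ring

theorem cast_catalan_eq_choose (n : ℕ) : (catalan n : ℚ) = 1 / (n + 1) * (2 * n).choose n := by
  rw [← Nat.centralBinom_eq_two_mul_choose, ← succ_mul_catalan_eq_centralBinom]
  push_cast
  field_simp

def ternaryCatalan (p : ℕ) : ℚ := (1 : ℚ) / (3 * p + 1) * (Nat.choose (3 * p + 1) p)

theorem ternaryCatalan_eq_factorial (p : ℕ) :
    ternaryCatalan p = (3 * p).factorial / (p.factorial * (2 * p + 1).factorial) := by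
  rw [ternaryCatalan, show 3 * p + 1 = p + (2 * p + 1) by ring, Nat.cast_add_choose,
    show p + (2 * p + 1) = 3 * p + 1 by ring, Nat.factorial_succ]
  push_cast
  field_simp

theorem ternaryCatalan_succ (p : ℕ) :
    ternaryCatalan (p + 1) = ternaryCatalan p * ((3 * p + 1) * (3 * p + 2) * (3 * p + 3)) /
      ((p + 1) * (2 * p + 2) * (2 * p + 3)) := by
  simp only [ternaryCatalan_eq_factorial, show 3 * (p + 1) = 3 * p + 2 + 1 by ring,
    show 2 * (p + 1) + 1 = 2 * p + 1 + 1 + 1 by ring, Nat.factorial_succ]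
  push_cast
  field_simp
  ring

namespace TernaryCatalanSum

def summand (n p : ℕ) : ℚ := ternaryCatalan p * (n + p).choose (3 * p)

/-- The truncated `3 * p - 1` is harmless: at `p = 0` the factor `p` vanishes. -/
def certificate (n p : ℕ) : ℚ :=
  2 * p * (2 * p + 1) * ternaryCatalan p * (n + p).choose (3 * p - 1)

theorem summand_recurrence (n p : ℕ) :
    (n + 1) * (n + 2) * summand (n + 1) p - 2 * (n + 1) * (2 * n + 1) * summand n p =
      certificate n p - certificate n (p + 1) := by
  rcases p with _ | p
  · simp [summand, certificate, ternaryCatalan, Nat.cast_choose_two]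
    ring
  -- Express every binomial through the one with the lowest indices: raising an index never
  -- divides by zero.
  set X : ℚ := ↑((n + (p + 1)).choose (3 * p + 2))
  have h₁ : ((n + 1 + (p + 1)).choose (3 * (p + 1)) : ℚ) = X * (n + p + 2) / (3 * p + 3) := by
    rw [show n + 1 + (p + 1) = n + (p + 1) + 1 by ring, show 3 * (p + 1) = 3 * p + 2 + 1 by ring,
      Nat.cast_choose_succ_succ]
    push_cast; ring
  have h₂ : ((n + (p + 1)).choose (3 * (p + 1)) : ℚ) = X * (n - 2 * p - 1) / (3 * p + 3) := by
    rw [show 3 * (p + 1) = 3 * p + 2 + 1 by ring, Nat.cast_choose_succ_right]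
    push_cast; ring
  have h₃ : ((n + (p + 1 + 1)).choose (3 * (p + 1 + 1) - 1) : ℚ) =
      X * (n + p + 2) * (n - 2 * p - 1) * (n - 2 * p - 2) /
        ((3 * p + 3) * (3 * p + 4) * (3 * p + 5)) := by
    rw [show 3 * (p + 1 + 1) - 1 = 3 * (p + 1) + 1 + 1 by omega, Nat.cast_choose_succ_right,
      Nat.cast_choose_succ_right, show n + (p + 1 + 1) = n + 1 + (p + 1) by ring, h₁]
    push_cast; field_simp; ring
  simp only [summand, certificate, ternaryCatalan_succ, h₁, h₂, h₃,
    show 3 * (p + 1) - 1 = 3 * p + 2 by omega]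
  push_cast
  field_simp
  ring

theorem summand_eq_zero {n p : ℕ} (h : n < 2 * p) : summand n p = 0 := by
  simp [summand, Nat.choose_eq_zero_of_lt (show n + p < 3 * p by omega)]

theorem sum_range_summand_of_le {n N : ℕ} (h : n / 2 + 1 ≤ N) :
    ∑ p ∈ range N, summand n p = ∑ p ∈ range (n / 2 + 1), summand n p :=
  (sum_subset (range_subset_range.2 h) fun p _ hp ↦
    summand_eq_zero (by simp only [mem_range] at hp; omega)).symm

theorem sum_summand_recurrence (n : ℕ) :
    (n + 2) * ∑ p ∈ range ((n + 1) / 2 + 1), summand (n + 1) p =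
      2 * (2 * n + 1) * ∑ p ∈ range (n / 2 + 1), summand n p := by
  have htelescope : ∑ p ∈ range (n + 2), (certificate n p - certificate n (p + 1)) = 0 := by
    rw [sum_range_sub', show certificate n 0 = 0 by simp [certificate],
      show certificate n (n + 2) = 0 by
        simp [certificate, Nat.choose_eq_zero_of_lt (show n + (n + 2) < 3 * (n + 2) - 1 by omega)]]
    simp
  simp only [← summand_recurrence, sum_sub_distrib, ← mul_sum,
    sum_range_summand_of_le (show (n + 1) / 2 + 1 ≤ n + 2 by omega),
    sum_range_summand_of_le (show n / 2 + 1 ≤ n + 2 by omega), sub_eq_zero] at htelescope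
  apply mul_left_cancel₀ (show (n + 1 : ℚ) ≠ 0 by positivity)
  linear_combination htelescope

theorem sum_range_summand_eq_catalan (n : ℕ) :
    ∑ p ∈ range (n / 2 + 1), summand n p = catalan n := by
  induction n with
  | zero => simp [summand, ternaryCatalan]
  | succ n ih =>
    apply mul_left_cancel₀ (show (n + 2 : ℚ) ≠ 0 by positivity)
    rw [sum_summand_recurrence, ih]
    exact_mod_cast (add_two_mul_catalan_succ n).symm

end TernaryCatalanSum

/-- Identity (1) of the paper: for every `n ≥ 0`,
`∑_{p=0}^{⌊n/2⌋} (1/(3p+1))·C(3p+1,p)·C(n+p,3p) = (1/(n+1))·C(2n,n)`,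
an identity of rational numbers (the right-hand side is the `n`-th Catalan number). -/
theorem sum_ternary_catalan_eq_catalan (n : ℕ) :
    ∑ p ∈ Finset.range (n / 2 + 1),
      ((1 : ℚ) / (3 * p + 1)) * (Nat.choose (3 * p + 1) p) * (Nat.choose (n + p) (3 * p))
      = ((1 : ℚ) / (n + 1)) * (Nat.choose (2 * n) n) :=
  (TernaryCatalanSum.sum_range_summand_eq_catalan n).trans (cast_catalan_eq_choose n)
end

section
/- For every integer n ≥ 0, the number of complete binary trees with n internal vertices (the n-th Catalan number) equals ∑_{p=0}^{⌊n/2⌋} (the number of complete ternary trees with p internal vertices) × (the number of functions assigning nonnegative integer colors to the 3p+1 vertices of a fixed complete ternary tree with p internal vertices so that the colors sum to n−2p). Equivalently, there is a bijection between the set B_n of complete binary trees with n internal vertices and the set T_n of colored complete ternary trees whose number p of internal vertices satisfies 0 ≤ p ≤ ⌊n/2⌋ and whose color numbers sum to n−2p. -/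
/-- A complete binary tree: every vertex is a leaf or has exactly two children. -/
inductive BinTree : Type
  | leaf : BinTree
  | node : BinTree → BinTree → BinTree

/-- The number of internal vertices of a complete binary tree. -/
def BinTree.internals : BinTree → ℕ
  | .leaf => 0
  | .node l r => l.internals + r.internals + 1

/-- The total number of vertices of a complete binary tree. -/
def BinTree.vertices : BinTree → ℕ
  | .leaf => 1
  | .node l r => l.vertices + r.vertices + 1

/-- The number of leaves of a complete binary tree. -/
def BinTree.leaves : BinTree → ℕ
  | .leaf => 1
  | .node l r => l.leaves + r.leaves

/-- A complete ternary tree: every vertex is a leaf or has exactly three children. -/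
inductive TernTree : Type
  | leaf : TernTree
  | node : TernTree → TernTree → TernTree → TernTree

/-- The number of internal vertices of a complete ternary tree. -/
def TernTree.internals : TernTree → ℕ
  | .leaf => 0
  | .node a b c => a.internals + b.internals + c.internals + 1

/-- The total number of vertices of a complete ternary tree. -/
def TernTree.vertices : TernTree → ℕ
  | .leaf => 1
  | .node a b c => a.vertices + b.vertices + c.vertices + 1

/-- A colored complete ternary tree: a complete ternary tree each of whose vertices
carries a nonnegative integer color number. -/
inductive CTernTree : Type
  | leaf : ℕ → CTernTree
  | node : ℕ → CTernTree → CTernTree → CTernTree → CTernTree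

/-- The number of internal vertices of a colored complete ternary tree. -/
def CTernTree.internals : CTernTree → ℕ
  | .leaf _ => 0
  | .node _ a b c => a.internals + b.internals + c.internals + 1

/-- The sum of the color numbers of a colored complete ternary tree. -/
def CTernTree.colorSum : CTernTree → ℕ
  | .leaf k => k
  | .node k a b c => k + a.colorSum + b.colorSum + c.colorSum

/-- The underlying (uncolored) complete ternary tree of a colored one. -/
def CTernTree.forget : CTernTree → TernTree
  | .leaf _ => .leaf
  | .node _ a b c => .node a.forget b.forget c.forget

/-- Increment the root color. -/
def CTernTree.incr : CTernTree → CTernTree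
  | .leaf k => .leaf (k+1)
  | .node k a b c => .node (k+1) a b c

/-- Bijection from binary trees to colored ternary trees. -/
def BinTree.toC : BinTree → CTernTree
  | .leaf => .leaf 0
  | .node .leaf t => (toC t).incr
  | .node (.node a b) c => .node 0 (toC a) (toC b) (toC c)

/-- Inverse bijection. -/
def CTernTree.toB : CTernTree → BinTree
  | .leaf 0 => .leaf
  | .leaf (k+1) => .node .leaf (toB (.leaf k))
  | .node 0 a b c => .node (.node (toB a) (toB b)) (toB c)
  | .node (k+1) a b c => .node .leaf (toB (.node k a b c))

lemma CTernTree.colorSum_incr (T : CTernTree) : T.incr.colorSum = T.colorSum + 1 := by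
  cases T <;> simp [incr, colorSum] <;> ring

lemma CTernTree.internals_incr (T : CTernTree) : T.incr.internals = T.internals := by
  cases T <;> simp [incr, internals]

lemma CTernTree.toB_incr (T : CTernTree) : T.incr.toB = .node .leaf T.toB := by
  cases T <;> simp [incr, toB]

lemma BinTree.toC_invariant (B : BinTree) :
    B.toC.colorSum + 2 * B.toC.internals = B.internals := by
  induction B using BinTree.toC.induct with
  | case1 => simp [toC, internals, CTernTree.colorSum, CTernTree.internals]
  | case2 t ih =>
      simp [toC, internals, CTernTree.colorSum_incr, CTernTree.internals_incr]
      omega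
  | case3 a b c iha ihb ihc =>
      simp [toC, internals, CTernTree.colorSum, CTernTree.internals]
      omega

lemma BinTree.toB_toC (B : BinTree) : B.toC.toB = B := by
  induction B using BinTree.toC.induct with
  | case1 => simp [toC, CTernTree.toB]
  | case2 t ih => simp [toC, CTernTree.toB_incr, ih]
  | case3 a b c iha ihb ihc => simp [toC, CTernTree.toB, iha, ihb, ihc]

lemma CTernTree.toC_toB (T : CTernTree) : T.toB.toC = T := by
  induction T using CTernTree.toB.induct with
  | case1 => simp [toB, BinTree.toC]
  | case2 k ih => simp [toB, BinTree.toC, ih, incr]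
  | case3 a b c iha ihb ihc => simp [toB, BinTree.toC, iha, ihb, ihc]
  | case4 k a b c ih => simp [toB, BinTree.toC, ih, incr]

lemma CTernTree.toB_internals (T : CTernTree) :
    T.toB.internals = T.colorSum + 2 * T.internals := by
  have := BinTree.toC_invariant T.toB
  rw [CTernTree.toC_toB] at this; exact this.symm

/-- **Theorem 2** of the paper, as an equality of cardinalities: the number of complete
binary trees with `n` internal vertices equals the number of colored complete ternary
trees with `p ≤ ⌊n/2⌋` internal vertices whose color numbers sum to `n − 2p`. -/
theorem card_binTrees_eq_card_colored_ternTrees (n : ℕ) :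
    Nat.card {B : BinTree // B.internals = n}
      = Nat.card {T : CTernTree //
          T.internals ≤ n / 2 ∧ T.colorSum = n - 2 * T.internals} := by
  have key : ∀ T : CTernTree,
      (T.internals ≤ n / 2 ∧ T.colorSum = n - 2 * T.internals) ↔
        T.colorSum + 2 * T.internals = n := by
    intro T
    constructor
    · rintro ⟨h1, h2⟩
      have : 2 * T.internals ≤ n := by omega
      omega
    · intro h
      constructor
      · omega
      · omega
  refine Nat.card_congr ?_
  refine
    { toFun := fun B => ⟨B.1.toC, (key _).mpr (by rw [B.1.toC_invariant]; exact B.2)⟩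
      invFun := fun T => ⟨T.1.toB, by rw [T.1.toB_internals]; exact (key _).mp T.2⟩
      left_inv := fun B => Subtype.ext (B.1.toB_toC)
      right_inv := fun T => Subtype.ext (T.1.toC_toB) }
end

section
/- Let C(X) ∈ ℚ⟦X⟦ be the generating function of the Catalan numbers, i.e. the formal power series with constant term 1 satisfying C = 1 + X·C². Then C also satisfies the cubic functional equation (1 − X)·C = 1 + X²·C³. Consequently, the unique formal power series G with constant term 1 satisfying (1 − X)·G = 1 + X²·G³ equals C. -/
open PowerSeries

/- Multiplying `C = 1 + X·C²` by `1 + X·C` gives the cubic. For uniqueness, the difference of the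
cubic equations for `G` and `C` factors as `(G - C)·(1 - X - X²(G² + GC + C²)) = 0`, and the second
factor has constant coefficient `1`, hence is a unit of `R⟦X⟧`. -/

theorem cubic_of_eq_one_add_mul_sq {R : Type*} [CommRing R] {x c : R}
    (h : c = 1 + x * c ^ 2) : (1 - x) * c = 1 + x ^ 2 * c ^ 3 := by
  linear_combination (1 + x * c) * h

namespace PowerSeries

variable {R : Type*} [CommRing R]

theorem isUnit_one_sub_X_sub_X_sq_mul (f : R⟦X⟧) : IsUnit (1 - X - X ^ 2 * f) :=
  isUnit_iff_constantCoeff.mpr (by simp)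

theorem eq_of_one_sub_X_mul_eq_one_add_X_sq_mul_cube {G C : R⟦X⟧}
    (hG : (1 - X) * G = 1 + X ^ 2 * G ^ 3) (hC : (1 - X) * C = 1 + X ^ 2 * C ^ 3) : G = C := by
  have hfactor : (G - C) * (1 - X - X ^ 2 * (G ^ 2 + G * C + C ^ 2)) = 0 := by
    linear_combination hG - hC
  exact sub_eq_zero.mp
    ((isUnit_one_sub_X_sub_X_sq_mul _).mul_left_eq_zero.mp hfactor)

end PowerSeries

theorem catalan_gf_cubic_equation_general (C : PowerSeries ℚ)
    (hC : C = 1 + PowerSeries.X * C ^ 2) :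
    (1 - PowerSeries.X) * C = 1 + PowerSeries.X ^ 2 * C ^ 3 ∧
      ∀ G : PowerSeries ℚ, PowerSeries.constantCoeff G = 1 →
        (1 - PowerSeries.X) * G = 1 + PowerSeries.X ^ 2 * G ^ 3 → G = C := by
  have hcubic := cubic_of_eq_one_add_mul_sq hC
  exact ⟨hcubic, fun _ _ hG => eq_of_one_sub_X_mul_eq_one_add_X_sq_mul_cube hG hcubic⟩

/-- The Catalan generating function `C`, i.e. the formal power series over `ℚ` with
constant term `1` satisfying `C = 1 + X·C²`, also satisfies the cubic equation
`(1 − X)·C = 1 + X²·C³`; moreover any power series `G` with constant term `1`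
satisfying `(1 − X)·G = 1 + X²·G³` equals `C`. -/
theorem catalan_gf_cubic_equation (C : PowerSeries ℚ)
    (hC0 : PowerSeries.constantCoeff C = 1)
    (hC : C = 1 + PowerSeries.X * C ^ 2) :
    (1 - PowerSeries.X) * C = 1 + PowerSeries.X ^ 2 * C ^ 3 ∧
      ∀ G : PowerSeries ℚ, PowerSeries.constantCoeff G = 1 →
        (1 - PowerSeries.X) * G = 1 + PowerSeries.X ^ 2 * G ^ 3 → G = C :=
  catalan_gf_cubic_equation_general C hC
end

section
/- For all integers n ≥ 0 and m ≥ 1, ∑_{p=0}^{⌊n/4⌋} (m/(5p+m))·C(5p+m, p)·C(n+p+m−1, n−4p) = ∑_{p=0}^{⌊n/2⌋} (−1)^p·(m/(m+n))·C(m+n+p−1, p)·C(m+2n−2p−1, n−2p), as an identity of rational numbers. -/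
/-!
Both sides are `[xⁿ] F(x)^m` for the power series `F = 1 + x F + x⁴ F⁵`. The powers of `F` obey
`F^(m+1) = F^m + x F^(m+1) + x⁴ F^(m+5)`, and this recurrence together with `[x⁰] F^m = 1` and
`[xⁿ] F⁰ = 0` for `n > 0` determines the whole coefficient array.

The left side is the expansion `F^m = (1 - x)^(-m) C₅(x⁴ / (1 - x)⁵)^m`: there the recurrence
is Pascal's rule for `(1 - x)^(-d)` combined with `c(m+1, q+1) = c(m, q+1) + c(m+5, q)` for the
numbers `c(m, p) = m/(5p+m) · C(5p+m, p)`.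

The right side is Lagrange inversion for `F = φ(x F)`, `φ = 1/ψ`, `ψ = (1 - t)(1 + t²)`:
`m/(m+n) · [tⁿ] φ^(m+n) = [tⁿ] (t ψ)' φ^(m+n+1)`, and the latter array satisfies the recurrence
because `φ = 1 + t + t⁴ φ`.
-/

open Finset PowerSeries

namespace PowerSeries
variable {R : Type*} [CommRing R]

theorem coeff_X_mul_derivative (f : R⟦X⟧) (n : ℕ) :
    coeff n (X * d⁄dX R f) = n * coeff n f := by
  cases n with
  | zero => simp
  | succ n => rw [coeff_succ_X_mul, coeff_derivative, mul_comm]; push_cast; ring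

theorem derivative_X_mul_mul_pow_succ {φ ψ : R⟦X⟧} (h : ψ * φ = 1) (N : ℕ) :
    (N : R⟦X⟧) * (d⁄dX R (X * ψ) * φ ^ (N + 1)) = (N : R⟦X⟧) * φ ^ N - X * d⁄dX R (φ ^ N) := by
  have hψ' : d⁄dX R ψ * φ = -(ψ * d⁄dX R φ) := by
    have := congrArg (d⁄dX R) h
    rw [Derivation.leibniz, Derivation.map_one_eq_zero, smul_eq_mul, smul_eq_mul] at this
    linear_combination this
  cases N with
  | zero => simp
  | succ N =>
    rw [Derivation.leibniz_pow, Derivation.leibniz, derivative_X]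
    simp only [smul_eq_mul, nsmul_eq_mul, Nat.add_sub_cancel]
    linear_combination (↑(N + 1) * X * φ ^ (N + 1)) * hψ' +
      (↑(N + 1) * (φ ^ (N + 1) - X * φ ^ N * d⁄dX R φ)) * h

theorem coeff_derivative_X_mul_mul_pow_succ {φ ψ : R⟦X⟧} (h : ψ * φ = 1) (N n : ℕ) :
    (N : R) * coeff n (d⁄dX R (X * ψ) * φ ^ (N + 1)) = ((N : R) - n) * coeff n (φ ^ N) := by
  have := congrArg (coeff n) (derivative_X_mul_mul_pow_succ h N)
  rw [← map_natCast (C (R := R)), coeff_C_mul, map_sub, coeff_C_mul, coeff_X_mul_derivative] at this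
  rw [this]; ring

theorem coeff_expand_mul_eq_sum (k : ℕ) (hk : k ≠ 0) (f g : R⟦X⟧) (n : ℕ) :
    coeff n (expand k hk f * g) = ∑ i ∈ range (n / k + 1), coeff i f * coeff (n - k * i) g := by
  rw [coeff_mul,
    Nat.sum_antidiagonal_eq_sum_range_succ (fun i j => coeff i (expand k hk f) * coeff j g)]
  have hsub : (range (n / k + 1)).map ⟨(k * ·), mul_right_injective₀ hk⟩ ⊆ range (n + 1) := by
    intro i
    simp only [mem_map, mem_range, Function.Embedding.coeFn_mk]
    rintro ⟨j, hj, rfl⟩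
    exact Nat.lt_succ_of_le
      ((Nat.mul_le_mul_left k (Nat.lt_succ_iff.1 hj)).trans (Nat.mul_div_le n k))
  rw [← sum_subset hsub, sum_map]
  · simp [coeff_expand_mul]
  · intro i hi hi'
    rw [coeff_expand, if_neg, zero_mul]
    rintro ⟨j, rfl⟩
    refine hi' (mem_map.2 ⟨j, ?_, rfl⟩)
    rw [mem_range, mul_comm] at hi
    exact mem_range.2 (Nat.lt_succ_of_le
      ((Nat.le_div_iff_mul_le (Nat.pos_of_ne_zero hk)).2 (Nat.lt_succ_iff.1 hi)))

theorem one_sub_X_mul_invOneSubPow_succ (S : Type*) [CommRing S] (d : ℕ) :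
    (1 - X) * (invOneSubPow S (d + 1)).val = (invOneSubPow S d).val := by
  simpa using one_sub_pow_mul_invOneSubPow_val_add_eq_invOneSubPow_val S d 1

end PowerSeries

/-- `f n m` models `[xⁿ] F(x)^m` for `F = 1 + x F + x⁴ F⁵`, through the recurrence
`F^(m+1) = F^m + x F^(m+1) + x⁴ F^(m+5)`; the corner value `f 0 0` is left free. -/
structure IsForestArray {R : Type*} [AddMonoidWithOne R] (f : ℕ → ℕ → R) : Prop where
  zero_succ (m : ℕ) : f 0 (m + 1) = 1
  succ_zero (n : ℕ) : f (n + 1) 0 = 0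
  succ_succ (n m : ℕ) :
    f (n + 1) (m + 1) = f n (m + 1) + f (n + 1) m + if 4 ≤ n + 1 then f (n + 1 - 4) (m + 5) else 0

theorem IsForestArray.eq {R : Type*} [AddMonoidWithOne R] {f g : ℕ → ℕ → R}
    (hf : IsForestArray f) (hg : IsForestArray g) (n m : ℕ) : f n (m + 1) = g n (m + 1) := by
  induction n using Nat.strong_induction_on generalizing m with
  | _ n ih =>
    cases n with
    | zero => rw [hf.zero_succ, hg.zero_succ]
    | succ n =>
      have hlast (k : ℕ) : (if 4 ≤ n + 1 then f (n + 1 - 4) (k + 5) else 0) =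
          if 4 ≤ n + 1 then g (n + 1 - 4) (k + 5) else 0 := by
        split_ifs
        · exact ih _ (by omega) _
        · rfl
      induction m with
      | zero => rw [hf.succ_succ, hg.succ_succ, hf.succ_zero, hg.succ_zero, ih n (by omega), hlast]
      | succ m ihm => rw [hf.succ_succ, hg.succ_succ, ihm, ih n (by omega), hlast]

namespace FiveCatalan

/-- `p = 0` is split off so that the value is `1` also for `m = 0`, where the formula reads
`0 / 0 = 0`. -/
def fussCatalan (m p : ℕ) : ℚ := if p = 0 then 1 else m / (5 * p + m) * (5 * p + m).choose p

theorem fussCatalan_of_pos {m : ℕ} (hm : 0 < m) (p : ℕ) :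
    fussCatalan m p = m / (5 * p + m) * (5 * p + m).choose p := by
  rcases Nat.eq_zero_or_pos p with rfl | hp
  · simp [fussCatalan, hm.ne']
  · simp [fussCatalan, hp.ne']

theorem fussCatalan_succ_succ (m q : ℕ) :
    fussCatalan (m + 1) (q + 1) = fussCatalan m (q + 1) + fussCatalan (m + 5) q := by
  rcases Nat.eq_zero_or_pos q with rfl | hq
  · simp [fussCatalan]
    field_simp
  set N := 5 * q + m + 5 with hN
  have h₁ : ((N + 1).choose (q + 1) : ℚ) = (N + 1) * N.choose q / (q + 1) := by
    rw [eq_div_iff (by positivity)]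
    exact_mod_cast (Nat.add_one_mul_choose_eq N q).symm
  have h₂ : (N.choose (q + 1) : ℚ) = N.choose q * (4 * q + m + 5) / (q + 1) := by
    rw [eq_div_iff (by positivity)]
    have := Nat.choose_succ_right_eq N q
    rw [show N - q = 4 * q + m + 5 by omega] at this
    exact_mod_cast this
  simp only [fussCatalan, Nat.succ_ne_zero, if_false, hq.ne']
  rw [show 5 * (q + 1) + (m + 1) = N + 1 by omega, show 5 * (q + 1) + m = N by omega,
    show 5 * q + (m + 5) = N by omega, h₁, h₂, hN]
  push_cast
  field_simp
  ring

noncomputable def fussCatalanTerm (m p : ℕ) : ℚ⟦X⟧ :=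
  fussCatalan m p • (X ^ (4 * p) * (invOneSubPow ℚ (5 * p + m)).val)

/-- The terms `p < N` of `(1 - X)^(-m) C₅(X⁴ / (1 - X)⁵)^m`; the remaining ones lie in
`X^(4N) ℚ⟦X⟧`. -/
noncomputable def fussCatalanSum (m N : ℕ) : ℚ⟦X⟧ := ∑ p ∈ range N, fussCatalanTerm m p

theorem one_sub_X_mul_fussCatalanTerm_succ_zero (m : ℕ) :
    (1 - X) * fussCatalanTerm (m + 1) 0 = fussCatalanTerm m 0 := by
  simp [fussCatalanTerm, fussCatalan, one_sub_X_mul_invOneSubPow_succ ℚ]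

theorem one_sub_X_mul_fussCatalanTerm_succ_succ (m q : ℕ) :
    (1 - X) * fussCatalanTerm (m + 1) (q + 1) =
      fussCatalanTerm m (q + 1) + X ^ 4 * fussCatalanTerm (m + 5) q := by
  have h := one_sub_X_mul_invOneSubPow_succ ℚ (5 * (q + 1) + m)
  simp only [fussCatalanTerm, fussCatalan_succ_succ, smul_eq_C_mul, map_add]
  rw [show 5 * q + (m + 5) = 5 * (q + 1) + m by ring]
  linear_combination (C (fussCatalan m (q + 1)) + C (fussCatalan (m + 5) q)) * X ^ (4 * (q + 1)) * h

theorem one_sub_X_mul_fussCatalanSum (m N : ℕ) :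
    (1 - X) * fussCatalanSum (m + 1) (N + 1) =
      fussCatalanSum m (N + 1) + X ^ 4 * fussCatalanSum (m + 5) N := by
  simp only [fussCatalanSum, sum_range_succ', mul_add, mul_sum,
    one_sub_X_mul_fussCatalanTerm_succ_succ, one_sub_X_mul_fussCatalanTerm_succ_zero,
    sum_add_distrib]
  ring

theorem coeff_fussCatalanTerm_of_lt {n m p : ℕ} (h : n < 4 * p) :
    coeff n (fussCatalanTerm m p) = 0 := by
  rw [fussCatalanTerm, coeff_smul, coeff_X_pow_mul', if_neg (by omega), smul_zero]

theorem coeff_fussCatalanSum_of_le {n m N N' : ℕ} (hN : N ≤ N') (hn : n < 4 * N) :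
    coeff n (fussCatalanSum m N') = coeff n (fussCatalanSum m N) := by
  simp only [fussCatalanSum, map_sum]
  refine (sum_subset (range_subset_range.2 hN) fun p _ hp => coeff_fussCatalanTerm_of_lt ?_).symm
  simp only [mem_range] at hp
  omega

theorem fussCatalanSum_zero (N : ℕ) : fussCatalanSum 0 (N + 1) = 1 := by
  simp [fussCatalanSum, fussCatalanTerm, fussCatalan, invOneSubPow_zero]

noncomputable def fussCatalanCoeff (n m : ℕ) : ℚ := coeff n (fussCatalanSum m (n + 1))

theorem isForestArray_fussCatalanCoeff : IsForestArray fussCatalanCoeff where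
  zero_succ m := by
    simp [fussCatalanCoeff, fussCatalanSum, fussCatalanTerm, fussCatalan,
      invOneSubPow_val_succ_eq_mk_add_choose]
  succ_zero n := by
    rw [fussCatalanCoeff, fussCatalanSum_zero, coeff_one, if_neg n.succ_ne_zero]
  succ_succ n m := by
    have h := congrArg (coeff (n + 1)) (one_sub_X_mul_fussCatalanSum m (n + 1))
    rw [sub_mul, one_mul, map_sub, coeff_succ_X_mul, map_add, coeff_X_pow_mul',
      coeff_fussCatalanSum_of_le (n := n) (N := n + 1) (by omega) (by omega)] at h
    simp only [fussCatalanCoeff]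
    split_ifs at h ⊢ with h4
    · rw [coeff_fussCatalanSum_of_le (n := n + 1 - 4) (m := m + 5) (N := n + 1 - 4 + 1)
        (by omega) (by omega)] at h
      linear_combination h
    · linear_combination h

theorem sum_eq_fussCatalanCoeff (n m : ℕ) (hm : 1 ≤ m) :
    ∑ p ∈ range (n / 4 + 1), (m : ℚ) / (5 * p + m) * (5 * p + m).choose p *
      (n + p + m - 1).choose (n - 4 * p) = fussCatalanCoeff n m := by
  rw [fussCatalanCoeff, coeff_fussCatalanSum_of_le (N := n / 4 + 1) (by omega) (by omega),
    fussCatalanSum, map_sum]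
  refine sum_congr rfl fun p hp => ?_
  have h4p : 4 * p ≤ n := by
    rw [mem_range] at hp
    omega
  rw [fussCatalanTerm, coeff_smul, coeff_X_pow_mul', if_pos h4p,
    invOneSubPow_val_eq_mk_sub_one_add_choose_of_pos _ _ (by omega), coeff_mk, smul_eq_mul,
    fussCatalan_of_pos hm, Nat.choose_symm_add,
    show 5 * p + m - 1 + (n - 4 * p) = n + p + m - 1 by omega]

noncomputable def psi : ℚ⟦X⟧ := 1 - X + X ^ 2 - X ^ 3

noncomputable def phi : ℚ⟦X⟧ := psi⁻¹

theorem psi_mul_phi : psi * phi = 1 :=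
  PowerSeries.mul_inv_cancel _ (by simp [psi])

theorem constantCoeff_phi : constantCoeff phi = 1 := by
  simpa [psi] using congrArg constantCoeff psi_mul_phi

theorem phi_eq : phi = 1 + X + X ^ 4 * phi := by
  have h : (1 + X) * psi = 1 - X ^ 4 := by rw [psi]; ring
  linear_combination (1 + X) * psi_mul_phi - phi * h

noncomputable def invOnePlusXSqPow (d : ℕ) : ℚ⟦X⟧ :=
  expand 2 two_ne_zero (rescale (-1) (invOneSubPow ℚ d).val)

theorem invOnePlusXSqPow_mul_pow (d : ℕ) : invOnePlusXSqPow d * (1 + X ^ 2) ^ d = 1 := by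
  have h := congrArg (fun f => expand 2 two_ne_zero (rescale (-1 : ℚ) f)) (invOneSubPow ℚ d).val_inv
  simp only [map_mul, map_one, invOneSubPow_inv_eq_one_sub_pow, map_pow, map_sub, rescale_X] at h
  simpa [invOnePlusXSqPow] using h

theorem phi_pow (d : ℕ) : phi ^ d = invOnePlusXSqPow d * (invOneSubPow ℚ d).val := by
  have h := (invOneSubPow ℚ d).val_inv
  rw [invOneSubPow_inv_eq_one_sub_pow] at h
  have hpsi : psi = (1 - X) * (1 + X ^ 2) := by rw [psi]; ring
  calc phi ^ d = phi ^ d * ((invOnePlusXSqPow d * (1 + X ^ 2) ^ d) *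
        ((invOneSubPow ℚ d).val * (1 - X) ^ d)) := by
          rw [invOnePlusXSqPow_mul_pow, h, one_mul, mul_one]
    _ = (psi * phi) ^ d * (invOnePlusXSqPow d * (invOneSubPow ℚ d).val) := by
          rw [mul_pow, hpsi, mul_pow]; ring
    _ = _ := by rw [psi_mul_phi, one_pow, one_mul]

theorem coeff_phi_pow_succ (a n : ℕ) : coeff n (phi ^ (a + 1)) =
    ∑ p ∈ range (n / 2 + 1),
      (-1 : ℚ) ^ p * (a + p).choose p * (a + (n - 2 * p)).choose (n - 2 * p) := by
  rw [phi_pow, invOnePlusXSqPow, coeff_expand_mul_eq_sum]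
  refine sum_congr rfl fun p _ => ?_
  simp only [invOneSubPow_val_succ_eq_mk_add_choose, coeff_rescale, coeff_mk]
  rw [Nat.choose_symm_add, Nat.choose_symm_add]

noncomputable def lagrangeCoeff (n m : ℕ) : ℚ := coeff n (d⁄dX ℚ (X * psi) * phi ^ (m + n + 1))

theorem derivative_X_mul_psi_mul_phi_pow_succ (N : ℕ) :
    d⁄dX ℚ (X * psi) * phi ^ (N + 1) = d⁄dX ℚ (X * psi) * phi ^ N +
      X * (d⁄dX ℚ (X * psi) * phi ^ N) + X ^ 4 * (d⁄dX ℚ (X * psi) * phi ^ (N + 1)) := by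
  linear_combination d⁄dX ℚ (X * psi) * phi ^ N * phi_eq

theorem isForestArray_lagrangeCoeff : IsForestArray lagrangeCoeff where
  zero_succ m := by
    rw [lagrangeCoeff, coeff_zero_eq_constantCoeff, map_mul, map_pow, constantCoeff_phi, one_pow,
      mul_one, ← coeff_zero_eq_constantCoeff_apply, coeff_derivative, coeff_succ_X_mul]
    simp [psi]
  succ_zero n := by
    have h := coeff_derivative_X_mul_mul_pow_succ psi_mul_phi (n + 1) (n + 1)
    rw [sub_self, zero_mul, mul_eq_zero] at h
    rw [lagrangeCoeff, zero_add]
    exact h.resolve_left (Nat.cast_ne_zero.2 n.succ_ne_zero)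
  succ_succ n m := by
    simp only [lagrangeCoeff]
    rw [show m + 1 + (n + 1) + 1 = m + n + 2 + 1 by ring, derivative_X_mul_psi_mul_phi_pow_succ,
      map_add, map_add, coeff_succ_X_mul, coeff_X_pow_mul', show m + 1 + n + 1 = m + n + 2 by ring,
      show m + (n + 1) + 1 = m + n + 2 by ring]
    split_ifs with h4
    · rw [show m + 5 + (n + 1 - 4) + 1 = m + n + 2 + 1 by omega]
      ring
    · ring

theorem sum_eq_lagrangeCoeff (n m : ℕ) (hm : 1 ≤ m) :
    ∑ p ∈ range (n / 2 + 1), (-1 : ℚ) ^ p * (m / (m + n)) * (m + n + p - 1).choose p *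
      (m + 2 * n - 2 * p - 1).choose (n - 2 * p) = lagrangeCoeff n m := by
  obtain ⟨a, ha⟩ : ∃ a, m + n = a + 1 := ⟨m + n - 1, by omega⟩
  have hsum : ∑ p ∈ range (n / 2 + 1), (-1 : ℚ) ^ p * (m / (m + n)) * (m + n + p - 1).choose p *
      (m + 2 * n - 2 * p - 1).choose (n - 2 * p) = m / (m + n) * coeff n (phi ^ (m + n)) := by
    rw [ha, coeff_phi_pow_succ, mul_sum]
    refine sum_congr rfl fun p hp => ?_
    have h2p : 2 * p ≤ n := by
      rw [mem_range] at hp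
      omega
    rw [show a + 1 + p - 1 = a + p by omega, show m + 2 * n - 2 * p - 1 = a + (n - 2 * p) by omega]
    ring
  have h := coeff_derivative_X_mul_mul_pow_succ psi_mul_phi (m + n) n
  rw [hsum, lagrangeCoeff]
  push_cast at h
  have hmn : (m : ℚ) + n ≠ 0 := by positivity
  field_simp
  linear_combination -h

end FiveCatalan

open FiveCatalan in
/-- Identity (3) of the paper: for all `n ≥ 0` and `m ≥ 1`,
`∑_{p=0}^{⌊n/4⌋} (m/(5p+m))·C(5p+m,p)·C(n+p+m−1,n−4p)
  = ∑_{p=0}^{⌊n/2⌋} (−1)^p·(m/(m+n))·C(m+n+p−1,p)·C(m+2n−2p−1,n−2p)`,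
as an identity of rational numbers. -/
theorem sum_five_catalan_eq_alternating_sum (n m : ℕ) (hm : 1 ≤ m) :
    ∑ p ∈ Finset.range (n / 4 + 1),
      ((m : ℚ) / (5 * p + m)) * (Nat.choose (5 * p + m) p) *
        (Nat.choose (n + p + m - 1) (n - 4 * p))
      = ∑ p ∈ Finset.range (n / 2 + 1),
          (-1 : ℚ) ^ p * ((m : ℚ) / (m + n)) * (Nat.choose (m + n + p - 1) p) *
            (Nat.choose (m + 2 * n - 2 * p - 1) (n - 2 * p)) := by
  obtain ⟨k, rfl⟩ : ∃ k, m = k + 1 := ⟨m - 1, by omega⟩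
  rw [sum_eq_fussCatalanCoeff n _ hm, sum_eq_lagrangeCoeff n _ hm]
  exact isForestArray_fussCatalanCoeff.eq isForestArray_lagrangeCoeff n k
end

section
/- Fix an integer k ≥ 2 and let C_k(X) ∈ ℚ⟦X⟧ be the unique formal power series with constant term 1 satisfying C_k = 1 + X·C_k^k. Then the power series F(X) defined coefficientwise by [Xⁿ]F = ∑_{p=0}^{⌊n/(k−1)⌋} (1/(kp+1))·C(kp+1, p)·C(n+p, n−(k−1)p) satisfies the functional equation F·(1 − X^{k−1}·F^{k−1}) = 1 + X·F. -/
/-!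
Write `w = 1/(1 - X)`, `v = X^(k-1) w^k` and `G = C_k(v)`, so that `F = w G` coefficientwise:
`[Xⁿ] w v^p = C(n + p, n - (k-1)p)` and the coefficients of `C_k` are the Fuss–Catalan numbers.
Substituting `v` into `C_k = 1 + X C_k^k` gives `X^(k-1) F^k = v G^k = G - 1`, hence
`F - X^(k-1) F^k = (w - 1) G + 1 = X F + 1` because `w - 1 = X w`.
-/

open Finset PowerSeries

/-- Fuss–Catalan numbers `[Xᵖ] A^s = s/(kp+s) · C(kp+s, p)`, cleared of the division. -/
theorem coeff_pow_mul_eq_of_eq_one_add_X_mul_pow {R : Type*} [CommRing R] [IsDomain R]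
    [CharZero R] {k : ℕ} (hk : 0 < k) {A : R⟦X⟧} (hA0 : constantCoeff A = 1)
    (hA : A = 1 + X * A ^ k) (p s : ℕ) :
    coeff p (A ^ s) * (k * p + s) = s * ((k * p + s).choose p : R) := by
  induction p generalizing s with
  | zero => simp [coeff_zero_eq_constantCoeff, hA0]
  | succ p ih =>
    induction s with
    | zero => simp [coeff_one]
    | succ s ihs =>
      have hrec : A ^ (s + 1) = A ^ s + X * A ^ (s + k) := by linear_combination A ^ s * hA
      obtain ⟨n, hn⟩ : ∃ n, n = k * (p + 1) + s := ⟨_, rfl⟩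
      have hnp : p ≤ n := by nlinarith
      have hn0 : (n : R) ≠ 0 := Nat.cast_ne_zero.2 (by nlinarith)
      have ih' := ih (s + k)
      rw [show k * p + (s + k) = n by rw [hn]; ring] at ih'
      rw [← hn] at ihs
      rw [show k * (p + 1) + (s + 1) = n + 1 by omega]
      have pascal : ((n + 1).choose (p + 1) : R) = n.choose p + n.choose (p + 1) := by
        norm_cast
      have absorb : (n.choose (p + 1) : R) * (p + 1) = n.choose p * (n - p) := by
        rw [← Nat.cast_sub hnp]
        exact_mod_cast Nat.choose_succ_right_eq n p
      have hnR : (n : R) = k * (p + 1) + s := by rw [hn]; push_cast; ring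
      push_cast at ihs ih' ⊢
      apply mul_right_cancel₀ hn0
      rw [hrec, map_add, coeff_succ_X_mul]
      linear_combination (n + 1 : R) * ihs + (n + 1 : R) * ih' - (s + 1 : R) * n * pascal
        - (k : R) * absorb + (coeff (p + 1) (A ^ s) + coeff p (A ^ (s + k))
          - n.choose p - n.choose (p + 1)) * hnR

theorem coeff_eq_one_div_mul_choose_of_eq_one_add_X_mul_pow {K : Type*} [Field K] [CharZero K]
    {k : ℕ} (hk : 0 < k) {A : K⟦X⟧} (hA0 : constantCoeff A = 1) (hA : A = 1 + X * A ^ k)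
    (p : ℕ) : coeff p A = 1 / (k * p + 1) * ((k * p + 1).choose p : K) := by
  have h := coeff_pow_mul_eq_of_eq_one_add_X_mul_pow hk hA0 hA p 1
  rw [pow_one, Nat.cast_one, one_mul] at h
  rw [← h, one_div_mul_eq_div, mul_div_cancel_right₀]
  exact_mod_cast (k * p).succ_ne_zero

theorem subst_eq_one_add_mul_pow_of_eq_one_add_X_mul_pow {R : Type*} [CommRing R] {k : ℕ}
    {A v : R⟦X⟧} (hv : HasSubst v) (hA : A = 1 + X * A ^ k) :
    A.subst v = 1 + v * A.subst v ^ k := by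
  have h := congrArg (substAlgHom hv) hA
  rwa [map_add, map_one, map_mul, map_pow, substAlgHom_X, coe_substAlgHom] at h

theorem X_pow_mul_dvd_subst_sub_sum {R : Type*} [CommRing R] {m : ℕ} {g : R⟦X⟧}
    (hg : X ^ m ∣ g) (f : R⟦X⟧) (N : ℕ) :
    X ^ (m * N) ∣ f.subst g - ∑ d ∈ range N, C (coeff d f) * g ^ d := by
  rcases Nat.eq_zero_or_pos m with rfl | hm
  · simp
  have hgs : HasSubst g :=
    HasSubst.of_constantCoeff_zero' (X_dvd_iff.1 ((dvd_pow_self X hm.ne').trans hg))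
  rw [X_pow_dvd_iff]
  intro i hi
  have hvanish : ∀ d, N ≤ d → coeff i (g ^ d) = 0 := fun d hd =>
    X_pow_dvd_iff.1 (pow_mul (X : R⟦X⟧) m d ▸ pow_dvd_pow_of_dvd hg d) i
      (hi.trans_le (Nat.mul_le_mul_left m hd))
  rw [map_sub, coeff_subst' hgs, finsum_eq_sum_of_support_subset (s := range N), map_sum]
  · simp only [coeff_C_mul, smul_eq_mul, sub_self]
  · intro d hd
    by_contra hdN
    simp only [coe_range, Set.mem_Iio, not_lt] at hdN
    exact hd (by simp only [hvanish d hdN, smul_zero])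

theorem coeff_mul_subst_eq_sum {R : Type*} [CommRing R] {m N n : ℕ} {g : R⟦X⟧}
    (hg : X ^ m ∣ g) (hn : n < m * N) (h f : R⟦X⟧) :
    coeff n (h * f.subst g) = ∑ d ∈ range N, coeff d f * coeff n (h * g ^ d) := by
  obtain ⟨q, hq⟩ := X_pow_mul_dvd_subst_sub_sum hg f N
  rw [sub_eq_iff_eq_add] at hq
  rw [hq, mul_add, map_add, mul_left_comm, coeff_X_pow_mul', if_neg (by omega), zero_add,
    mul_sum, map_sum]
  refine sum_congr rfl fun d _ => ?_
  rw [mul_left_comm, coeff_C_mul]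

theorem invOneSubPow_eq_pow (S : Type*) [CommRing S] (d : ℕ) :
    invOneSubPow S d = invOneSubPow S 1 ^ d := by
  simp_rw [invOneSubPow_eq_inv_one_sub_pow, pow_one]

theorem coeff_X_pow_mul_invOneSubPow (S : Type*) [CommRing S] (a b n : ℕ) :
    coeff n (X ^ a * (invOneSubPow S (b + 1) : S⟦X⟧))
      = if a ≤ n then ((b + (n - a)).choose b : S) else 0 := by
  rw [coeff_X_pow_mul', invOneSubPow_val_succ_eq_mk_add_choose, coeff_mk]

theorem coeff_invOneSubPow_one_mul_X_pow_mul_pow (S : Type*) [CommRing S] (j p n : ℕ) :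
    coeff n ((invOneSubPow S 1 : S⟦X⟧) * (X ^ j * (invOneSubPow S 1 : S⟦X⟧) ^ (j + 1)) ^ p)
      = if j * p ≤ n then ((n + p).choose (n - j * p) : S) else 0 := by
  have h : (invOneSubPow S 1 : S⟦X⟧) * (X ^ j * (invOneSubPow S 1 : S⟦X⟧) ^ (j + 1)) ^ p
      = X ^ (j * p) * (invOneSubPow S ((j + 1) * p + 1) : S⟦X⟧) := by
    rw [invOneSubPow_eq_pow S ((j + 1) * p + 1), Units.val_pow_eq_pow_val]
    ring
  rw [h, coeff_X_pow_mul_invOneSubPow]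
  split_ifs with hjp
  · rw [show (j + 1) * p + (n - j * p) = n + p by rw [add_one_mul]; omega,
      Nat.choose_symm_of_eq_add (by rw [add_one_mul]; omega : n + p = (j + 1) * p + (n - j * p))]
  · rfl

/-- Section 3 of the paper: for `k ≥ 2`, the power series
`F(X) = (1/(1−X))·C_k(X^{k−1}/(1−X)^k)`, whose coefficients are
`[Xⁿ]F = ∑_{p=0}^{⌊n/(k−1)⌋} (1/(kp+1))·C(kp+1,p)·C(n+p,n−(k−1)p)`,
satisfies the functional equation `F·(1 − X^{k−1}·F^{k−1}) = 1 + X·F`. -/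
theorem gf_substitution_functional_equation (k : ℕ) (hk : 2 ≤ k)
    (Ck : PowerSeries ℚ) (hC0 : PowerSeries.constantCoeff Ck = 1)
    (hCk : Ck = 1 + PowerSeries.X * Ck ^ k)
    (F : PowerSeries ℚ)
    (hF : ∀ n : ℕ, PowerSeries.coeff n F
      = ∑ p ∈ Finset.range (n / (k - 1) + 1),
          ((1 : ℚ) / (k * p + 1)) * (Nat.choose (k * p + 1) p) *
            (Nat.choose (n + p) (n - (k - 1) * p))) :
    F * (1 - PowerSeries.X ^ (k - 1) * F ^ (k - 1)) = 1 + PowerSeries.X * F := by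
  obtain ⟨j, rfl⟩ : ∃ j, k = j + 1 := ⟨k - 1, by omega⟩
  have hj : 0 < j := by omega
  simp only [Nat.add_sub_cancel] at hF ⊢
  set w : ℚ⟦X⟧ := ↑(invOneSubPow ℚ 1)
  set G := Ck.subst (X ^ j * w ^ (j + 1))
  have hw : w * (1 - X) = 1 := by
    have h := (invOneSubPow ℚ 1).val_inv
    rwa [invOneSubPow_inv_eq_one_sub_pow, pow_one] at h
  have hG : G = 1 + X ^ j * w ^ (j + 1) * G ^ (j + 1) :=
    subst_eq_one_add_mul_pow_of_eq_one_add_X_mul_pow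
      (HasSubst.of_constantCoeff_zero' (by simp [hj.ne'])) hCk
  have hFG : F = w * G := by
    ext n
    rw [hF, coeff_mul_subst_eq_sum (dvd_mul_right (X ^ j) _) (Nat.lt_mul_div_succ n hj)]
    refine sum_congr rfl fun p hp => ?_
    have hjp : j * p ≤ n :=
      (Nat.mul_comm j p).trans_le (Nat.mul_le_of_le_div j p n (Nat.lt_succ_iff.1 (mem_range.1 hp)))
    rw [coeff_eq_one_div_mul_choose_of_eq_one_add_X_mul_pow (by omega) hC0 hCk,
      coeff_invOneSubPow_one_mul_X_pow_mul_pow, if_pos hjp]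
  rw [hFG]
  linear_combination hG + G * hw
end

section
/- For all integers m ≥ 1 and p ≥ 0, the rational number (m/(3p+m))·C(3p+m, p) is a nonnegative integer, i.e. (3p+m) divides m·C(3p+m, p). -/
/-!
Write `n = 3p + m`. Then `m·C(n, p) = n·C(n, p) - 3·(p·C(n, p))`, and the absorption identity
`p·C(n, p) = n·C(n - 1, p - 1)` shows that `n` divides both terms on the right.
-/

namespace Nat

theorem dvd_mul_choose (n p : ℕ) : n ∣ p * n.choose p := by
  rcases p with _ | p
  · simp
  rcases n with _ | n
  · simp
  exact ⟨n.choose p, by rw [add_one_mul_choose_eq, mul_comm]⟩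

theorem add_mul_dvd_mul_choose (k m p : ℕ) :
    (k * p + m) ∣ m * (k * p + m).choose p := by
  set n := k * p + m
  have hsplit : m * n.choose p = n * n.choose p - k * (p * n.choose p) := by
    rw [← mul_assoc, ← Nat.sub_mul]
    congr 1
    omega
  rw [hsplit]
  exact Nat.dvd_sub (dvd_mul_right _ _) ((dvd_mul_choose n p).mul_left k)

end Nat

theorem fuss_catalan_ternary_integrality_general (m p : ℕ) :
    (3 * p + m) ∣ m * Nat.choose (3 * p + m) p :=
  Nat.add_mul_dvd_mul_choose 3 m p

/-- For `m ≥ 1` and `p ≥ 0`, `(3p+m)` divides `m·C(3p+m,p)`; the quotient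
`(m/(3p+m))·C(3p+m,p)` is the number of forests of `m` complete ternary trees
with `p` internal vertices in total. -/
theorem fuss_catalan_ternary_integrality (m p : ℕ) (hm : 1 ≤ m) :
    (3 * p + m) ∣ m * Nat.choose (3 * p + m) p :=
  fuss_catalan_ternary_integrality_general m p
end

section
/- For all integers m ≥ 1 and n ≥ 0, the rational number (m/(2n+m))·C(2n+m, n) is a nonnegative integer, i.e. (2n+m) divides m·C(2n+m, n). -/
/-- For `m ≥ 1` and `n ≥ 0`, `(2n+m)` divides `m·C(2n+m,n)`; the quotient
`(m/(2n+m))·C(2n+m,n)` is the number of forests of `m` complete binary trees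
with `n` internal vertices in total. -/
theorem fuss_catalan_binary_integrality (m n : ℕ) (hm : 1 ≤ m) :
    (2 * n + m) ∣ m * Nat.choose (2 * n + m) n := by
  cases n with
  | zero => simpa using Dvd.intro 1 rfl
  | succ k =>
    set N := 2 * k + m + 1 with hN
    have h2 : 2 * (k + 1) + m = N + 1 := by omega
    rw [h2]
    -- (N+1)*C(N,k) = C(N+1,k+1)*(k+1)
    have h3 : (N + 1) * Nat.choose N k = Nat.choose (N + 1) (k + 1) * (k + 1) :=
      Nat.add_one_mul_choose_eq N k
    -- C(N,k+1)*(N+1) = C(N+1,k+1)*(N+1-(k+1))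
    have h4 : Nat.choose N (k + 1) * (N + 1) =
        Nat.choose (N + 1) (k + 1) * (N + 1 - (k + 1)) :=
      Nat.choose_mul_succ_eq N (k + 1)
    have h5 : N + 1 - (k + 1) = m + (k + 1) := by omega
    have key : m * Nat.choose (N + 1) (k + 1) + (N + 1) * Nat.choose N k
        = (N + 1) * Nat.choose N (k + 1) := by
      rw [h3, mul_comm (N + 1) (Nat.choose N (k + 1)), h4, h5]
      ring
    have hd1 : (N + 1) ∣ (N + 1) * Nat.choose N k := Dvd.intro _ rfl
    have hd2 : (N + 1) ∣ m * Nat.choose (N + 1) (k + 1) + (N + 1) * Nat.choose N k := by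
      rw [key]; exact Dvd.intro _ rfl
    exact (Nat.dvd_add_iff_left hd1).mpr hd2
end

section
/- For all integers m ≥ 1 and n ≥ 0, there is a bijection between the set of ordered m-tuples (F a forest) of colored complete ternary trees whose total number p of internal vertices satisfies 0 ≤ p ≤ ⌊n/2⌋ and whose color numbers sum to n−2p, and the set of ordered m-tuples of complete binary trees with n internal vertices in total. In particular these two sets have the same cardinality, namely (m/(2n+m))·C(2n+m, n). -/
open Finset

/-!
A colored ternary tree with root color `k` and subtrees `a, b, c` is sent to the binary tree
obtained by hanging `node (node a' b') c'` (the images of the subtrees) below a right spine of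
`k` vertices whose left children are leaves. Reading a binary tree from the root, a leaf as left
child adds one to the current color and `node (node a b) r` opens a ternary vertex, so the map is
invertible. Each ternary vertex accounts for two binary internal vertices and each unit of color
for one, which turns the constraint on colored forests into "`n` internal vertices in total".

Removing the root of the first tree of a binary forest gives the recurrence
`forestCount (m+1) (n+1) = forestCount m (n+1) + forestCount (m+2) n`, which the ballot numbers
`m / (2n+m) · C(2n+m, n)` also satisfy.
-/

namespace CTernTree

def addRootColor (k : ℕ) : CTernTree → CTernTree
  | .leaf j => .leaf (k + j)
  | .node j a b c => .node (k + j) a b c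

@[simp]
lemma addRootColor_zero (s : CTernTree) : s.addRootColor 0 = s := by
  cases s <;> simp [addRootColor]

@[simp]
lemma addRootColor_addRootColor (k j : ℕ) (s : CTernTree) :
    (s.addRootColor j).addRootColor k = s.addRootColor (k + j) := by
  cases s <;> simp [addRootColor, Nat.add_assoc]

def toBinTree : CTernTree → BinTree
  | .leaf k => (BinTree.node .leaf)^[k] .leaf
  | .node k a b c => (BinTree.node .leaf)^[k] (.node (.node a.toBinTree b.toBinTree) c.toBinTree)

lemma toBinTree_addRootColor (k : ℕ) (s : CTernTree) :
    (s.addRootColor k).toBinTree = (BinTree.node .leaf)^[k] s.toBinTree := by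
  cases s <;> simp [addRootColor, toBinTree, Function.iterate_add_apply]

end CTernTree

namespace BinTree

def toCTernTree : BinTree → CTernTree
  | .leaf => .leaf 0
  | .node .leaf r => r.toCTernTree.addRootColor 1
  | .node (.node a b) r => .node 0 a.toCTernTree b.toCTernTree r.toCTernTree

lemma toCTernTree_iterate_node_leaf (k : ℕ) (t : BinTree) :
    ((node leaf)^[k] t).toCTernTree = t.toCTernTree.addRootColor k := by
  induction k with
  | zero => simp
  | succ k ih => rw [Function.iterate_succ_apply', toCTernTree, ih,
      CTernTree.addRootColor_addRootColor, Nat.add_comm]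

lemma internals_iterate_node_leaf (k : ℕ) (t : BinTree) :
    ((node leaf)^[k] t).internals = t.internals + k := by
  induction k with
  | zero => rfl
  | succ k ih => simp only [Function.iterate_succ_apply', internals, ih]; omega

lemma toBinTree_toCTernTree (t : BinTree) : t.toCTernTree.toBinTree = t := by
  induction t using toCTernTree.induct with
  | case1 => rfl
  | case2 r ih => simp [toCTernTree, CTernTree.toBinTree_addRootColor, ih]
  | case3 a b r iha ihb ihr => simp [toCTernTree, CTernTree.toBinTree, iha, ihb, ihr]

end BinTree

namespace CTernTree

lemma toCTernTree_toBinTree (s : CTernTree) : s.toBinTree.toCTernTree = s := by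
  induction s with
  | leaf k => simp [toBinTree, BinTree.toCTernTree_iterate_node_leaf, BinTree.toCTernTree,
      addRootColor]
  | node k a b c iha ihb ihc => simp [toBinTree, BinTree.toCTernTree_iterate_node_leaf,
      BinTree.toCTernTree, iha, ihb, ihc, addRootColor]

def equivBinTree : CTernTree ≃ BinTree where
  toFun := toBinTree
  invFun := BinTree.toCTernTree
  left_inv := toCTernTree_toBinTree
  right_inv := BinTree.toBinTree_toCTernTree

lemma internals_toBinTree (s : CTernTree) :
    s.toBinTree.internals = 2 * s.internals + s.colorSum := by
  induction s with
  | leaf k => simp [toBinTree, BinTree.internals_iterate_node_leaf, BinTree.internals, internals,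
      colorSum]
  | node k a b c iha ihb ihc =>
      simp only [toBinTree, BinTree.internals_iterate_node_leaf, BinTree.internals, internals,
        colorSum, iha, ihb, ihc]
      ring

def forestEquiv (ι : Type*) [Fintype ι] (n : ℕ) :
    {F : ι → CTernTree //
        (∑ i, (F i).internals) ≤ n / 2 ∧
        (∑ i, (F i).colorSum) = n - 2 * (∑ i, (F i).internals)} ≃
      {G : ι → BinTree // (∑ i, (G i).internals) = n} :=
  (Equiv.piCongrRight fun _ => equivBinTree).subtypeEquiv fun F => by
    have hsum : ∑ i, (F i).toBinTree.internals =
        2 * ∑ i, (F i).internals + ∑ i, (F i).colorSum := by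
      simp only [internals_toBinTree, sum_add_distrib, mul_sum]
    change _ ↔ ∑ i, (F i).toBinTree.internals = n
    omega

end CTernTree

def ballot (m n : ℕ) : ℚ := (m : ℚ) / (2 * n + m) * (Nat.choose (2 * n + m) n)

lemma ballot_succ_succ (m n : ℕ) :
    ballot (m + 1) (n + 1) = ballot m (n + 1) + ballot (m + 2) n := by
  set s := 2 * n + m + 2
  have hsucc : (s.choose (n + 1) : ℚ) * (n + 1) = s.choose n * (n + m + 2) := by
    have := Nat.choose_succ_right_eq s n
    rw [show s - n = n + m + 2 by omega] at this
    exact_mod_cast this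
  have hpascal : ((s + 1).choose (n + 1) : ℚ) = s.choose n + s.choose (n + 1) := by
    exact_mod_cast Nat.choose_succ_succ s n
  simp only [ballot, show 2 * (n + 1) + (m + 1) = s + 1 by omega,
    show 2 * (n + 1) + m = s by omega, show 2 * n + (m + 2) = s by omega, hpascal]
  push_cast
  field_simp
  linear_combination 2 * (2 * (n : ℚ) + m + 2) * hsucc

namespace BinTree

def equivOption : BinTree ≃ Option (BinTree × BinTree) where
  toFun
    | leaf => none
    | node l r => some (l, r)
  invFun
    | none => leaf
    | some (l, r) => node l r
  left_inv t := by cases t <;> rfl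
  right_inv o := by rcases o with _ | ⟨l, r⟩ <;> rfl

lemma internals_eq_zero_iff {t : BinTree} : t.internals = 0 ↔ t = leaf := by
  cases t <;> simp [internals]

lemma finite_setOf_internals_le (n : ℕ) : {t : BinTree | t.internals ≤ n}.Finite := by
  induction n with
  | zero =>
    refine (Set.finite_singleton leaf).subset ?_
    exact fun t h => internals_eq_zero_iff.mp (Nat.le_zero.mp h)
  | succ n ih =>
    refine ((Set.finite_singleton leaf).union
      ((ih.prod ih).image fun p => node p.1 p.2)).subset ?_
    rintro (_ | ⟨l, r⟩) h
    · simp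
    · have h : l.internals + r.internals + 1 ≤ n + 1 := h
      exact Or.inr ⟨(l, r), ⟨(by omega : l.internals ≤ n), (by omega : r.internals ≤ n)⟩,
        rfl⟩

instance (ι : Type*) [Fintype ι] (n : ℕ) :
    Finite {G : ι → BinTree // ∑ i, (G i).internals = n} := by
  refine Set.Finite.to_subtype ((Set.Finite.pi' fun _ => finite_setOf_internals_le n).subset ?_)
  intro G hG i
  exact hG ▸ single_le_sum (fun j _ => Nat.zero_le (G j).internals) (mem_univ i)

noncomputable def forestCount (m n : ℕ) : ℕ :=
  Nat.card {G : Fin m → BinTree // ∑ i, (G i).internals = n}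

def consForestEquiv (m n : ℕ) :
    {G : Fin (m + 1) → BinTree // ∑ i, (G i).internals = n + 1} ≃
      {G : Fin m → BinTree // ∑ i, (G i).internals = n + 1} ⊕
        {G : Fin (m + 2) → BinTree // ∑ i, (G i).internals = n} :=
  let e : (Fin (m + 1) → BinTree) ≃ (Fin m → BinTree) ⊕ (Fin (m + 2) → BinTree) :=
    (Fin.consEquiv fun _ => BinTree).symm.trans <|
      (equivOption.prodCongr (Equiv.refl _)).trans <| optionProdEquiv.trans <|
        Equiv.sumCongr (Equiv.refl _) <| (Equiv.prodAssoc _ _ _).trans <|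
          ((Equiv.refl _).prodCongr (Fin.consEquiv fun _ => BinTree)).trans
            (Fin.consEquiv fun _ => BinTree)
  (e.subtypeEquiv (q := Sum.elim (fun H => ∑ i, (H i).internals = n + 1)
      (fun K => ∑ i, (K i).internals = n)) fun G => by
    rcases h : G 0 with _ | ⟨l, r⟩ <;>
      simp [e, equivOption, Fin.consEquiv, optionProdEquiv, h, Fin.sum_univ_succ,
        Fin.tail, internals]
    omega).trans Equiv.subtypeSum

lemma forestCount_succ_succ (m n : ℕ) :
    forestCount (m + 1) (n + 1) = forestCount m (n + 1) + forestCount (m + 2) n := by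
  rw [forestCount, Nat.card_congr (consForestEquiv m n), Nat.card_sum, forestCount, forestCount]

lemma forestCount_zero_succ (n : ℕ) : forestCount 0 (n + 1) = 0 :=
  have : IsEmpty {G : Fin 0 → BinTree // ∑ i, (G i).internals = n + 1} :=
    ⟨fun G => by simpa using G.2⟩
  Nat.card_of_isEmpty

lemma forestCount_zero_right (m : ℕ) : forestCount m 0 = 1 := by
  refine Nat.card_eq_one_iff_exists.mpr
    ⟨⟨fun _ => leaf, by simp [internals]⟩, fun ⟨G, hG⟩ => ?_⟩
  ext1; funext i
  exact internals_eq_zero_iff.mp (sum_eq_zero_iff.mp hG i (mem_univ i))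

-- Excludes `m = n = 0`, where `ballot 0 0 = 0 / 0 = 0` but the empty forest counts once.
lemma forestCount_eq_ballot {m n : ℕ} (hmn : 0 < m + n) :
    (forestCount m n : ℚ) = ballot m n := by
  induction n generalizing m with
  | zero =>
    have hm : (m : ℚ) ≠ 0 := by exact_mod_cast hmn.ne'
    simp [forestCount_zero_right, ballot, hm]
  | succ n ih =>
    induction m with
    | zero => simp [forestCount_zero_succ, ballot]
    | succ m ihm =>
      rw [forestCount_succ_succ, ballot_succ_succ, Nat.cast_add, ihm (by omega),
        ih (by omega)]

end BinTree

/-- Forest extension of Theorem 2 of the paper: for `m ≥ 1` and `n ≥ 0` there is a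
bijection between forests of `m` colored complete ternary trees whose total number `p`
of internal vertices satisfies `p ≤ ⌊n/2⌋` and whose color numbers sum to `n − 2p`,
and forests of `m` complete binary trees with `n` internal vertices in total; in
particular both sets have cardinality `(m/(2n+m))·C(2n+m,n)`. -/
theorem colored_ternary_forests_equiv_binary_forests (m n : ℕ) (hm : 1 ≤ m) :
    Nonempty
      ({F : Fin m → CTernTree //
          (∑ i, (F i).internals) ≤ n / 2 ∧
          (∑ i, (F i).colorSum) = n - 2 * (∑ i, (F i).internals)} ≃
        {G : Fin m → BinTree // (∑ i, (G i).internals) = n}) ∧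
    (Nat.card {G : Fin m → BinTree // (∑ i, (G i).internals) = n} : ℚ)
      = ((m : ℚ) / (2 * n + m)) * (Nat.choose (2 * n + m) n) :=
  ⟨⟨CTernTree.forestEquiv (Fin m) n⟩, BinTree.forestCount_eq_ballot (by omega)⟩
end
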